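/- arXiv:2404.02395 — 2 statements merged into one kernel-verified Lean document; each statement's English description precedes it below -/
import Mathlib

section
/- Suppose batch sizes B_1,...,B_N are nonnegative integers with Σ B_n = B, computing times t_n = ⌈B_n/ρ⌉, and the TDMA iteration time is T = max{ t_N, t_{N-1}+1, ..., t_1 + N−1 } + 1 where the B_n are sorted ascending. If ρ((m−1)N + N(N+1)/2) < B for a positive integer m, then T ≥ m + N + 1. -/
/-! If `T ≤ m + N`, device `n` must finish computing within `m + n - 1` slots, so it holds at
most `ρ (m + n - 1)` samples; summing over `n` bounds `B` by `ρ ((m - 1) N + N (N + 1) / 2)`. -/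

open Finset

theorem le_mul_of_natCeil_div_le {K : Type*} [Field K] [LinearOrder K] [IsStrictOrderedRing K]
    [FloorSemiring K] {a c : K} {k : ℕ} (hc : 0 < c) (h : ⌈a / c⌉₊ ≤ k) : a ≤ c * k :=
  (div_le_iff₀' hc).1 (Nat.ceil_le.1 h)

theorem sum_Icc_add_sub_one (m N : ℕ) :
    ∑ n ∈ Icc 1 N, ((m : ℚ) + n - 1) = ((m : ℚ) - 1) * N + N * (N + 1) / 2 := by
  induction N with
  | zero => simp
  | succ k ih =>
    rw [sum_Icc_succ_top (by omega), ih]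
    push_cast
    ring

theorem lt_add_of_sup_add_tsub_lt {N m : ℕ} {t : ℕ → ℕ}
    (h : (Icc 1 N).sup (fun n => t n + (N - n)) < m + N) {n : ℕ} (hn : n ∈ Icc 1 N) :
    t n < m + n := by
  have hn_lt := (le_sup (f := fun n => t n + (N - n)) hn).trans_lt h
  rw [mem_Icc] at hn
  omega

theorem tdma_iteration_time_lower_bound_general
    (N ρ Btot m : ℕ) (hρ : 0 < ρ)
    (hB : (ρ : ℚ) * (((m : ℚ) - 1) * N + N * (N + 1) / 2) < (Btot : ℚ))
    (B : ℕ → ℕ)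
    (hsum : ∑ n ∈ Finset.Icc 1 N, B n = Btot)
    (t : ℕ → ℕ) (ht : ∀ n, t n = ⌈(B n : ℚ) / ρ⌉₊)
    (T : ℕ) (hT : T = (Finset.Icc 1 N).sup (fun n => t n + (N - n)) + 1) :
    m + N + 1 ≤ T := by
  by_contra! hT_lt
  have hbatch : ∀ n ∈ Icc 1 N, (B n : ℚ) ≤ ρ * ((m : ℚ) + n - 1) := by
    intro n hn
    have hdeadline : (t n : ℚ) + 1 ≤ m + n := by
      exact_mod_cast lt_add_of_sup_add_tsub_lt (by omega) hn
    calc (B n : ℚ) ≤ ρ * t n := le_mul_of_natCeil_div_le (by exact_mod_cast hρ) (ht n).ge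
      _ ≤ ρ * ((m : ℚ) + n - 1) := by gcongr; linarith
  have hcapacity : (Btot : ℚ) ≤ ρ * (((m : ℚ) - 1) * N + N * (N + 1) / 2) := by
    rw [← hsum, Nat.cast_sum, ← sum_Icc_add_sub_one, mul_sum]
    exact sum_le_sum hbatch
  linarith

/-- TDMA iteration-time lower bound: if `ρ((m−1)N + N(N+1)/2) < B`, then for any
ascending batch allocation `B₁ ≤ ⋯ ≤ B_N` summing to `B`, the TDMA iteration time
`max { ⌈B_N/ρ⌉, ⌈B_{N−1}/ρ⌉+1, ..., ⌈B₁/ρ⌉+N−1 } + 1` is at least `m + N + 1`. -/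
theorem tdma_iteration_time_lower_bound
    (N ρ Btot m : ℕ) (hN : 1 ≤ N) (hρ : 0 < ρ) (hm : 1 ≤ m)
    (hB : (ρ : ℚ) * (((m : ℚ) - 1) * N + N * (N + 1) / 2) < (Btot : ℚ))
    (B : ℕ → ℕ)
    (hsum : ∑ n ∈ Finset.Icc 1 N, B n = Btot)
    (hsorted : ∀ n n', 1 ≤ n → n ≤ n' → n' ≤ N → B n ≤ B n')
    (t : ℕ → ℕ) (ht : ∀ n, t n = ⌈(B n : ℚ) / ρ⌉₊)
    (T : ℕ) (hT : T = (Finset.Icc 1 N).sup (fun n => t n + (N - n)) + 1) :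
    m + N + 1 ≤ T :=
  tdma_iteration_time_lower_bound_general N ρ Btot m hρ hB B hsum t ht T hT
end

section
/- In the two-device TDMA model with total batch B and per-slot computing rate ρ, if B ≤ ρ(2m + 3) and batch allocation B₁ = ρ(m+1), B₂ = B − B₁ (so long as B₂ ≤ ρ(m+2)), then the iteration time max{⌈B₂/ρ⌉, ⌈B₁/ρ⌉ + 1} + 1 equals m + 3, which is the minimum over all allocations with B₁ + B₂ = B when B > ρ(2m + 1). -/
/-!
A slot processes at most `ρ` samples, so device `i` needs `⌈Bᵢ/ρ⌉` slots and the first device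
starts one slot late. Finishing within `k + 2` slots therefore forces `B₂ ≤ ρ(k+1)` and
`B₁ ≤ ρk`, i.e. `B ≤ ρ(2k+1)`; conversely `B₁ = ρ(m+1)` with `B₂ ≤ ρ(m+2)` finishes in exactly
`m + 3` slots.
-/

def twoDeviceIterTime (ρ B₁ B₂ : ℕ) : ℕ :=
  max ⌈(B₂ : ℚ) / ρ⌉₊ (⌈(B₁ : ℚ) / ρ⌉₊ + 1) + 1

lemma natCeil_div_le_iff {ρ : ℕ} (hρ : 0 < ρ) (a k : ℕ) :
    ⌈(a : ℚ) / ρ⌉₊ ≤ k ↔ a ≤ ρ * k := by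
  rw [Nat.ceil_le, div_le_iff₀ (by exact_mod_cast hρ), mul_comm]
  exact_mod_cast Iff.rfl

lemma natCeil_mul_div_cancel_left {ρ : ℕ} (hρ : 0 < ρ) (k : ℕ) :
    ⌈((ρ * k : ℕ) : ℚ) / ρ⌉₊ = k := by
  rw [Nat.cast_mul, mul_div_cancel_left₀ _ (by exact_mod_cast hρ.ne'), Nat.ceil_natCast]

lemma twoDeviceIterTime_stepwise {ρ : ℕ} (hρ : 0 < ρ) {k B₂ : ℕ} (hB₂ : B₂ ≤ ρ * (k + 2)) :
    twoDeviceIterTime ρ (ρ * (k + 1)) B₂ = k + 3 := by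
  have hceil₂ : ⌈(B₂ : ℚ) / ρ⌉₊ ≤ k + 2 := (natCeil_div_le_iff hρ _ _).2 hB₂
  rw [twoDeviceIterTime, natCeil_mul_div_cancel_left hρ]
  omega

lemma le_twoDeviceIterTime {ρ : ℕ} (hρ : 0 < ρ) {k B₁ B₂ : ℕ}
    (hB : ρ * (2 * k + 1) < B₁ + B₂) : k + 3 ≤ twoDeviceIterTime ρ B₁ B₂ := by
  by_contra! htime
  have hceil₂ : ⌈(B₂ : ℚ) / ρ⌉₊ ≤ k + 1 := by unfold twoDeviceIterTime at htime; omega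
  have hceil₁ : ⌈(B₁ : ℚ) / ρ⌉₊ ≤ k := by unfold twoDeviceIterTime at htime; omega
  have hB₂ := (natCeil_div_le_iff hρ _ _).1 hceil₂
  have hB₁ := (natCeil_div_le_iff hρ _ _).1 hceil₁
  nlinarith

theorem tdma_two_device_optimal_general
    (ρ B m : ℕ) (hρ : 0 < ρ)
    (hlow : ρ * (2 * (m - 1) + 3) < B)
    (B₁ B₂ : ℕ) (hB₁ : B₁ = ρ * (m + 1)) (hB₂ : B₂ = B - B₁)
    (hB₂le : B₂ ≤ ρ * (m + 2)) :
    max ⌈(B₂ : ℚ) / ρ⌉₊ (⌈(B₁ : ℚ) / ρ⌉₊ + 1) + 1 = m + 3 ∧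
    ∀ B₁' B₂' : ℕ, B₁' + B₂' = B → B₁' ≤ B₂' →
      m + 3 ≤ max ⌈(B₂' : ℚ) / ρ⌉₊ (⌈(B₁' : ℚ) / ρ⌉₊ + 1) + 1 := by
  have hlow' : ρ * (2 * m + 1) < B :=
    lt_of_le_of_lt (Nat.mul_le_mul_left ρ (by omega)) hlow
  subst hB₁
  refine ⟨twoDeviceIterTime_stepwise hρ hB₂le, fun B₁' B₂' hsum _ => ?_⟩
  exact le_twoDeviceIterTime hρ (hsum ▸ hlow')

/-- Two-device TDMA: with `ρ(2(m−1)+3) < B ≤ ρ(2m+3)` and the step-wise allocation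
`B₁ = ρ(m+1)`, `B₂ = B − B₁` (with `B₂ ≤ ρ(m+2)`), the iteration time
`max{⌈B₂/ρ⌉, ⌈B₁/ρ⌉+1} + 1` equals `m + 3`, and this is minimal among all
allocations `B₁' + B₂' = B` with `B₁' ≤ B₂'`. -/
theorem tdma_two_device_optimal
    (ρ B m : ℕ) (hρ : 0 < ρ) (hB : 0 < B) (hm : 1 ≤ m)
    (hlow : ρ * (2 * (m - 1) + 3) < B) (hhigh : B ≤ ρ * (2 * m + 3))
    (B₁ B₂ : ℕ) (hB₁ : B₁ = ρ * (m + 1)) (hB₂ : B₂ = B - B₁)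
    (hB₂le : B₂ ≤ ρ * (m + 2)) :
    max ⌈(B₂ : ℚ) / ρ⌉₊ (⌈(B₁ : ℚ) / ρ⌉₊ + 1) + 1 = m + 3 ∧
    ∀ B₁' B₂' : ℕ, B₁' + B₂' = B → B₁' ≤ B₂' →
      m + 3 ≤ max ⌈(B₂' : ℚ) / ρ⌉₊ (⌈(B₁' : ℚ) / ρ⌉₊ + 1) + 1 :=
  tdma_two_device_optimal_general ρ B m hρ hlow B₁ B₂ hB₁ hB₂ hB₂le
end
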